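/- arXiv:2008.02269 — 6 statements merged into one kernel-verified Lean document; each statement's English description precedes it below -/
import Mathlib

section
/- For every integer k ≥ 0 there is a polynomial τ of degree 2k+1 (namely τ(y) = C ∫₀^y t^k (1-t)^k dt with C = (2k+1)·binom(2k,k)) such that τ(0)=0, τ(1)=1, and for any ℓ ∈ {0,1} and any 0 ≤ Δ ≤ 1/2, |τ(y) - ℓ| ≤ (k + 1/2)·(6Δ)^k whenever |y - ℓ| ≤ Δ. -/
/-!
`τ_k` is `(2k+1)·C(2k,k)` times an antiderivative of `t^k(1-t)^k`, hence a polynomial of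
degree `2k+1`. The Beta integral `∫₀¹ t^k(1-t)^k = k!²/(2k+1)!` gives `τ_k(1) = 1`. Near
`ℓ ∈ {0,1}` the integrand is small: if `|t - ℓ| ≤ Δ ≤ 1/2` then `|t(1-t)| ≤ Δ(1+Δ) ≤ 3Δ/2`,
so `|τ_k(y) - ℓ| ≤ (2k+1)·C(2k,k)·(3Δ/2)^k·Δ`, and `C(2k,k) ≤ 4^k`, `(2k+1)Δ ≤ k + 1/2`
finish the estimate.
-/

noncomputable def tauPoly (k : ℕ) (y : ℝ) : ℝ :=
  ((2 * k + 1 : ℕ) : ℝ) * ((Nat.choose (2 * k) k : ℕ) : ℝ) *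
    ∫ t in (0 : ℝ)..y, t ^ k * (1 - t) ^ k

open Polynomial intervalIntegral Nat

namespace Polynomial

variable {K : Type*} [Field K]

noncomputable def antideriv (p : K[X]) : K[X] :=
  p.sum fun i a => C (a / (i + 1)) * X ^ (i + 1)

@[simp]
theorem eval_antideriv_zero (p : K[X]) : (antideriv p).eval 0 = 0 := by
  simp [antideriv, Polynomial.sum, eval_finsetSum]

variable [CharZero K]

theorem derivative_antideriv (p : K[X]) : derivative (antideriv p) = p := by
  rw [antideriv, Polynomial.sum, map_sum]
  conv_rhs => rw [p.as_sum_support]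
  refine Finset.sum_congr rfl fun i _ => ?_
  rw [derivative_C_mul_X_pow, ← C_mul_X_pow_eq_monomial, Nat.add_sub_cancel]
  congr 1
  push_cast
  field_simp

theorem natDegree_antideriv {p : K[X]} (hp : p ≠ 0) :
    (antideriv p).natDegree = p.natDegree + 1 := by
  have hder := derivative_antideriv p
  have hpos : (antideriv p).natDegree ≠ 0 := by
    rwa [Ne, ← derivative_eq_zero, hder]
  have := natDegree_derivative (antideriv p)
  rw [hder] at this
  omega

theorem integral_eval_eq_eval_antideriv (p : ℝ[X]) (y : ℝ) :
    ∫ t in (0 : ℝ)..y, p.eval t = (antideriv p).eval y := by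
  have hint : IntervalIntegrable (fun t => (derivative (antideriv p)).eval t)
      MeasureTheory.volume 0 y := by
    rw [derivative_antideriv]
    exact p.continuous.intervalIntegrable _ _
  conv_lhs => rw [← derivative_antideriv p]
  rw [integral_eq_sub_of_hasDerivAt (fun t _ => (antideriv p).hasDerivAt t) hint,
    eval_antideriv_zero, sub_zero]

section IsDomain

variable {R : Type*} [CommRing R] [IsDomain R]

theorem natDegree_one_sub_X : (1 - X : R[X]).natDegree = 1 := by
  compute_degree!

theorem one_sub_X_ne_zero : (1 - X : R[X]) ≠ 0 :=
  ne_zero_of_natDegree_gt (n := 0) (by rw [natDegree_one_sub_X]; exact zero_lt_one)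

theorem X_pow_mul_one_sub_X_pow_ne_zero (k : ℕ) : (X : R[X]) ^ k * (1 - X) ^ k ≠ 0 :=
  mul_ne_zero (pow_ne_zero _ X_ne_zero) (pow_ne_zero _ one_sub_X_ne_zero)

theorem natDegree_X_pow_mul_one_sub_X_pow (k : ℕ) :
    ((X : R[X]) ^ k * (1 - X) ^ k).natDegree = 2 * k := by
  rw [natDegree_mul (pow_ne_zero _ X_ne_zero) (pow_ne_zero _ one_sub_X_ne_zero), natDegree_pow,
    natDegree_pow, natDegree_X, natDegree_one_sub_X]
  ring

end IsDomain

end Polynomial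

theorem integral_pow_mul_one_sub_pow_succ (m n : ℕ) :
    ∫ t in (0 : ℝ)..1, t ^ m * (1 - t) ^ (n + 1) =
      (∫ t in (0 : ℝ)..1, t ^ m * (1 - t) ^ n) -
        ∫ t in (0 : ℝ)..1, t ^ (m + 1) * (1 - t) ^ n := by
  rw [← integral_sub (by apply Continuous.intervalIntegrable; fun_prop)
    (by apply Continuous.intervalIntegrable; fun_prop)]
  congr 1 with t
  ring

theorem integral_pow_mul_one_sub_pow (m n : ℕ) :
    ∫ t in (0 : ℝ)..1, t ^ m * (1 - t) ^ n = (m ! * n ! : ℝ) / (m + n + 1)! := by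
  induction n generalizing m with
  | zero => simp [Nat.factorial_succ]; field_simp
  | succ n ih =>
    rw [integral_pow_mul_one_sub_pow_succ, ih, ih, show m + 1 + n + 1 = m + (n + 1) + 1 by ring,
      show m + (n + 1) + 1 = m + n + 1 + 1 by ring]
    simp only [Nat.factorial_succ]
    push_cast
    field_simp
    ring

theorem tauPoly_zero (k : ℕ) : tauPoly k 0 = 0 := by
  simp [tauPoly]

theorem tauPoly_one (k : ℕ) : tauPoly k 1 = 1 := by
  have hchoose : ((2 * k).choose k * k ! * k ! : ℝ) = (2 * k)! := by
    exact_mod_cast (two_mul k ▸ Nat.add_choose_mul_factorial_mul_factorial k k)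
  rw [tauPoly, integral_pow_mul_one_sub_pow, ← two_mul, Nat.factorial_succ]
  push_cast
  rw [← hchoose]
  field_simp
  exact div_self (by exact_mod_cast (Nat.choose_pos (by omega)).ne')

theorem tauPoly_sub_tauPoly (k : ℕ) (a y : ℝ) :
    tauPoly k y - tauPoly k a =
      (2 * k + 1 : ℕ) * ((2 * k).choose k : ℝ) * ∫ t in a..y, t ^ k * (1 - t) ^ k := by
  rw [tauPoly, tauPoly, ← mul_sub, integral_interval_sub_left] <;>
    apply Continuous.intervalIntegrable <;> fun_prop

theorem abs_mul_one_sub_le {ℓ Δ t : ℝ} (hℓ : ℓ = 0 ∨ ℓ = 1) (hΔ : Δ ≤ 1 / 2)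
    (ht : |t - ℓ| ≤ Δ) : |t * (1 - t)| ≤ 3 / 2 * Δ := by
  rw [abs_mul, mul_comm (3 / 2)]
  rcases hℓ with rfl | rfl
  · rw [sub_zero] at ht
    refine mul_le_mul ht ?_ (abs_nonneg _) (by linarith [abs_nonneg t])
    rw [abs_le] at ht ⊢
    constructor <;> linarith
  · rw [abs_sub_comm] at ht
    rw [mul_comm]
    refine mul_le_mul ht ?_ (abs_nonneg _) (by linarith [abs_nonneg (1 - t)])
    rw [abs_le] at ht ⊢
    constructor <;> linarith

theorem abs_tauPoly_sub_tauPoly_le (k : ℕ) {ℓ Δ y : ℝ} (hℓ : ℓ = 0 ∨ ℓ = 1) (hΔ : Δ ≤ 1 / 2)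
    (hy : |y - ℓ| ≤ Δ) :
    |tauPoly k y - tauPoly k ℓ| ≤
      (2 * k + 1 : ℕ) * ((2 * k).choose k : ℝ) * ((3 / 2 * Δ) ^ k * Δ) := by
  have hintegrand : ∀ t ∈ Set.uIoc ℓ y, ‖t ^ k * (1 - t) ^ k‖ ≤ (3 / 2 * Δ) ^ k := fun t ht => by
    rw [← mul_pow, norm_pow, Real.norm_eq_abs]
    exact pow_le_pow_left₀ (abs_nonneg _) (abs_mul_one_sub_le hℓ hΔ
      ((Set.abs_sub_left_of_mem_uIcc (Set.uIoc_subset_uIcc ht)).trans hy)) k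
  have hΔ₀ : 0 ≤ Δ := (abs_nonneg _).trans hy
  rw [tauPoly_sub_tauPoly, abs_mul, abs_of_nonneg (by positivity)]
  gcongr
  exact (norm_integral_le_of_norm_le_const hintegrand).trans (by gcongr)

theorem two_mul_add_one_mul_choose_mul_le {Δ : ℝ} (k : ℕ) (hΔ₀ : 0 ≤ Δ) (hΔ : Δ ≤ 1 / 2) :
    (2 * k + 1 : ℕ) * ((2 * k).choose k : ℝ) * ((3 / 2 * Δ) ^ k * Δ) ≤
      (k + 1 / 2) * (6 * Δ) ^ k := by
  have hchoose : ((2 * k).choose k : ℝ) ≤ 4 ^ k := by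
    exact_mod_cast Nat.centralBinom_eq_two_mul_choose k ▸ Nat.centralBinom_le_four_pow k
  calc (2 * k + 1 : ℕ) * ((2 * k).choose k : ℝ) * ((3 / 2 * Δ) ^ k * Δ)
      = ((2 * k + 1 : ℕ) * Δ) * (((2 * k).choose k : ℝ) * (3 / 2 * Δ) ^ k) := by ring
    _ ≤ (k + 1 / 2) * (4 ^ k * (3 / 2 * Δ) ^ k) := by
        gcongr
        push_cast
        nlinarith
    _ = (k + 1 / 2) * (6 * Δ) ^ k := by rw [← mul_pow]; ring

noncomputable def tauPolynomial (k : ℕ) : ℝ[X] :=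
  C ((2 * k + 1 : ℕ) * ((2 * k).choose k : ℝ)) * antideriv (X ^ k * (1 - X) ^ k)

theorem eval_tauPolynomial (k : ℕ) (y : ℝ) : (tauPolynomial k).eval y = tauPoly k y := by
  simp [tauPolynomial, tauPoly, ← integral_eval_eq_eval_antideriv]

theorem natDegree_tauPolynomial (k : ℕ) : (tauPolynomial k).natDegree = 2 * k + 1 := by
  have hchoose : ((2 * k).choose k : ℝ) ≠ 0 := by exact_mod_cast (Nat.choose_pos (by omega)).ne'
  rw [tauPolynomial, natDegree_C_mul (mul_ne_zero (by positivity) hchoose),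
    natDegree_antideriv (X_pow_mul_one_sub_X_pow_ne_zero k),
    natDegree_X_pow_mul_one_sub_X_pow]

/-- **Proposition 4.1 (polynomial approximation of the threshold function).**
For every `k ≥ 0`, `τ_k` agrees with a polynomial of degree `2k+1`, satisfies
`τ_k(0) = 0` and `τ_k(1) = 1`, and for any `ℓ ∈ {0,1}` and `0 ≤ Δ ≤ 1/2`,
`|τ_k(y) - ℓ| ≤ (k + 1/2)·(6Δ)^k` whenever `|y - ℓ| ≤ Δ`. -/
theorem tauPoly_threshold (k : ℕ) :
    (∃ p : Polynomial ℝ, p.natDegree = 2 * k + 1 ∧ ∀ y, p.eval y = tauPoly k y) ∧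
    tauPoly k 0 = 0 ∧ tauPoly k 1 = 1 ∧
    ∀ ℓ : ℝ, (ℓ = 0 ∨ ℓ = 1) → ∀ Δ : ℝ, 0 ≤ Δ → Δ ≤ 1 / 2 →
      ∀ y : ℝ, |y - ℓ| ≤ Δ →
        |tauPoly k y - ℓ| ≤ ((k : ℝ) + 1 / 2) * (6 * Δ) ^ k := by
  refine ⟨⟨tauPolynomial k, natDegree_tauPolynomial k, eval_tauPolynomial k⟩,
    tauPoly_zero k, tauPoly_one k, fun ℓ hℓ Δ hΔ₀ hΔ y hy => ?_⟩
  have hτℓ : tauPoly k ℓ = ℓ := by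
    rcases hℓ with rfl | rfl
    exacts [tauPoly_zero k, tauPoly_one k]
  calc |tauPoly k y - ℓ| = |tauPoly k y - tauPoly k ℓ| := by rw [hτℓ]
    _ ≤ (2 * k + 1 : ℕ) * ((2 * k).choose k : ℝ) * ((3 / 2 * Δ) ^ k * Δ) :=
        abs_tauPoly_sub_tauPoly_le k hℓ hΔ hy
    _ ≤ (k + 1 / 2) * (6 * Δ) ^ k := two_mul_add_one_mul_choose_mul_le k hΔ₀ hΔ
end

section
/- For integers d ≥ 1 and 0 ≤ h ≤ d, the number of connected multigraphs α on vertex set {1,…,n} (self-loops allowed) with exactly d edges, spanning vertex 1, and spanning exactly d+1−h vertices, is at most (d·n)^d · (d/n)^h. -/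
variable {n : ℕ}

/-- Number of edges of a multigraph (with multiplicity), where the multigraph on `[n]`
is given by edge multiplicities `α : Sym2 (Fin n) → ℕ` (self-loops allowed). -/
def mgEdges (α : Sym2 (Fin n) → ℕ) : ℕ := ∑ e, α e

/-- The set of vertices spanned by the multigraph `α`. -/
def mgVerts (α : Sym2 (Fin n) → ℕ) : Set (Fin n) := {v | ∃ e, α e ≠ 0 ∧ v ∈ e}

/-- The multigraph `α` is connected: any two spanned vertices are joined by a path of edges. -/
def mgConnected (α : Sym2 (Fin n) → ℕ) : Prop :=
  ∀ u ∈ mgVerts α, ∀ v ∈ mgVerts α,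
    Relation.ReflTransGen (fun a b => α s(a, b) ≠ 0) u v

/-!
Explore a connected multigraph from the root, listing its `m + 1` vertices so that each vertex
after the root is joined to an earlier one. The `m` edges used to reach new vertices are distinct;
each is recorded by the label of the new vertex and the position of its earlier neighbour. Each of
the `h` remaining edges is recorded by the positions of its two endpoints. This code determines the
multigraph, so with `d = m + h` there are at most `(n d)^m (d^2)^h = (d n)^d (d / n)^h` of them
(when `h > 0`, positions range over `m + 1 ≤ d` values).
-/

open Function Relation

theorem Relation.ReflTransGen.exists_rel_mem_notMem {V : Type*} {R : V → V → Prop} {s : Set V}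
    {a b : V} (h : ReflTransGen R a b) (ha : a ∈ s) (hb : b ∉ s) :
    ∃ x ∈ s, ∃ y ∉ s, R x y := by
  induction h with
  | refl => exact absurd ha hb
  | @tail b c _ hbc ih =>
    by_cases hbs : b ∈ s
    · exact ⟨b, hbs, c, hb, hbc⟩
    · exact ih hbs

section SearchOrder

variable {V : Type*} {R : V → V → Prop} {S : Set V} {r : V}

theorem exists_search_order_of_lt_ncard (hr : r ∈ S)
    (hreach : ∀ u ∈ S, ReflTransGen R r u) (hR : ∀ a b, R a b → b ∈ S) :
    ∀ k < S.ncard, ∃ v : Fin (k + 1) → V, Injective v ∧ v 0 = r ∧ Set.range v ⊆ S ∧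
      ∀ i : Fin k, ∃ j ≤ i, R (v j.castSucc) (v i.succ) := by
  intro k hk
  induction k with
  | zero =>
    exact ⟨fun _ => r, fun a b _ => Subsingleton.elim (α := Fin 1) a b, rfl, by simpa using hr,
      finZeroElim⟩
  | succ k ih =>
    obtain ⟨v, hv, hv0, hvS, hpar⟩ := ih (by omega)
    obtain ⟨u, huS, huv⟩ := Set.exists_mem_notMem_of_ncard_lt_ncard (s := Set.range v) (t := S)
      (by rwa [Set.ncard_range_of_injective hv, Nat.card_eq_fintype_card, Fintype.card_fin])
    obtain ⟨_, ⟨j, rfl⟩, y, hy, hjy⟩ :=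
      (hreach u huS).exists_rel_mem_notMem (hv0 ▸ Set.mem_range_self 0) huv
    refine ⟨Fin.snoc v y, Fin.snoc_injective_of_injective hv hy, ?_, ?_, ?_⟩
    · rw [← Fin.castSucc_zero, Fin.snoc_castSucc, hv0]
    · rintro _ ⟨i, rfl⟩
      induction i using Fin.lastCases with
      | last => simpa using hR _ _ hjy
      | cast i => simpa using hvS (Set.mem_range_self i)
    · intro i
      induction i using Fin.lastCases with
      | last => exact ⟨j, Fin.le_last j, by simpa using hjy⟩
      | cast i =>
        obtain ⟨j', hj'i, hj'⟩ := hpar i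
        refine ⟨j'.castSucc, Fin.castSucc_le_castSucc_iff.2 hj'i, ?_⟩
        rwa [Fin.succ_castSucc, Fin.snoc_castSucc, Fin.snoc_castSucc]

theorem exists_search_order {m : ℕ} (hr : r ∈ S) (hreach : ∀ u ∈ S, ReflTransGen R r u)
    (hR : ∀ a b, R a b → b ∈ S) (hS : S.ncard = m + 1) :
    ∃ v : Fin (m + 1) → V, Injective v ∧ v 0 = r ∧ Set.range v = S ∧
      ∀ i : Fin m, ∃ j ≤ i, R (v j.castSucc) (v i.succ) := by
  obtain ⟨v, hv, hv0, hvS, hpar⟩ := exists_search_order_of_lt_ncard hr hreach hR m (by omega)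
  refine ⟨v, hv, hv0, Set.eq_of_subset_of_ncard_le hvS ?_ (Set.finite_of_ncard_pos (by omega)),
    hpar⟩
  rw [Set.ncard_range_of_injective hv, hS, Nat.card_eq_fintype_card, Fintype.card_fin]

end SearchOrder

theorem Multiset.exists_eq_ofFn_of_forall_mem_range {ι β : Type*} {f : ι → β}
    {E : Multiset β} (hE : ∀ x ∈ E, x ∈ Set.range f) {k : ℕ} (hk : Multiset.card E = k) :
    ∃ c : Fin k → ι, E = ↑(List.ofFn fun j => f (c j)) := by
  induction E using Multiset.induction_on generalizing k with
  | empty => subst hk; exact ⟨finZeroElim, rfl⟩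
  | cons a E ih =>
    obtain ⟨k, rfl⟩ : ∃ k', k = k' + 1 := ⟨k - 1, by rw [Multiset.card_cons] at hk; omega⟩
    obtain ⟨i, rfl⟩ := hE a (Multiset.mem_cons_self a E)
    obtain ⟨c, rfl⟩ := ih (fun x hx => hE x (Multiset.mem_cons_of_mem hx)) (by simpa using hk)
    exact ⟨Fin.cons i c, by simp [List.ofFn_succ]⟩

section Encoding

variable {V : Type*} {m h : ℕ}

def parentEdges (v : Fin (m + 1) → V) (p : Fin m → Fin m) : Multiset (Sym2 V) :=
  ↑(List.ofFn fun i => s(v (p i).castSucc, v i.succ))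

def pairEdges (v : Fin (m + 1) → V) (x : Fin h → Fin (m + 1) × Fin (m + 1)) :
    Multiset (Sym2 V) :=
  ↑(List.ofFn fun j => s(v (x j).1, v (x j).2))

theorem card_parentEdges (v : Fin (m + 1) → V) (p : Fin m → Fin m) :
    Multiset.card (parentEdges v p) = m := by
  simp [parentEdges]

theorem nodup_parentEdges {v : Fin (m + 1) → V} (hv : Injective v) {p : Fin m → Fin m}
    (hp : ∀ i, p i ≤ i) : (parentEdges v p).Nodup := by
  refine Multiset.coe_nodup.2 (List.nodup_ofFn.2 fun i i' hii' => ?_)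
  rcases Sym2.eq_iff.1 hii' with ⟨-, hsucc⟩ | ⟨h₁, h₂⟩
  · exact Fin.succ_injective _ (hv hsucc)
  · -- a swap would give `i + 1 = p i' ≤ i'` and `i' + 1 = p i ≤ i`
    have h₁ := Fin.val_eq_of_eq (hv h₁)
    have h₂ := Fin.val_eq_of_eq (hv h₂)
    have := hp i
    have := hp i'
    simp only [Fin.val_castSucc, Fin.val_succ] at h₁ h₂
    omega

end Encoding

def mgEdgeMultiset (α : Sym2 (Fin n) → ℕ) : Multiset (Sym2 (Fin n)) :=
  ∑ e, Multiset.replicate (α e) e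

theorem count_mgEdgeMultiset (α : Sym2 (Fin n) → ℕ) (e : Sym2 (Fin n)) :
    (mgEdgeMultiset α).count e = α e := by
  simp [mgEdgeMultiset, Multiset.count_sum', Multiset.count_replicate]

theorem card_mgEdgeMultiset (α : Sym2 (Fin n) → ℕ) :
    Multiset.card (mgEdgeMultiset α) = mgEdges α := by
  simp [mgEdgeMultiset, mgEdges]

/-- Vertex `0` is the root, vertex `i + 1` is labelled `w i` and joined to vertex `p i`, and the
`j`-th remaining edge joins the vertices at the positions `x j`. -/
abbrev MgCode (n m h : ℕ) : Type :=
  (Fin m → Fin n) × (Fin m → Fin m) × (Fin h → Fin (m + 1) × Fin (m + 1))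

def mgDecode {m h : ℕ} (r : Fin n) (c : MgCode n m h) : Sym2 (Fin n) → ℕ :=
  let v : Fin (m + 1) → Fin n := Fin.cons r c.1
  fun e => (parentEdges v c.2.1 + pairEdges v c.2.2).count e

theorem exists_mgDecode_eq {r : Fin n} {m h : ℕ} {α : Sym2 (Fin n) → ℕ}
    (hE : mgEdges α = m + h) (hc : mgConnected α) (hr : r ∈ mgVerts α)
    (hV : (mgVerts α).ncard = m + 1) : ∃ c : MgCode n m h, α = mgDecode r c := by
  have mem_mgVerts {e : Sym2 (Fin n)} (he : α e ≠ 0) {a : Fin n} (ha : a ∈ e) :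
      a ∈ mgVerts α :=
    ⟨e, he, ha⟩
  obtain ⟨v, hv, hv0, hvV, hpar⟩ := exists_search_order (R := fun a b => α s(a, b) ≠ 0) hr
    (hc r hr) (fun a b hab => mem_mgVerts hab (Sym2.mem_mk_right a b)) hV
  choose p hpi hp using hpar
  have hT : parentEdges v p ≤ mgEdgeMultiset α := by
    refine (Multiset.le_iff_subset (nodup_parentEdges hv hpi)).2 fun e he => ?_
    obtain ⟨i, rfl⟩ := List.mem_ofFn.1 he
    exact Multiset.count_pos.1 ((count_mgEdgeMultiset α _).symm ▸ Nat.pos_of_ne_zero (hp i))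
  have hrest : ∀ e ∈ mgEdgeMultiset α - parentEdges v p,
      e ∈ Set.range fun ab : Fin (m + 1) × Fin (m + 1) => s(v ab.1, v ab.2) := by
    intro e he
    have hαe : α e ≠ 0 := by
      rw [← count_mgEdgeMultiset α e]
      exact Multiset.count_ne_zero.2 (Multiset.mem_of_le tsub_le_self he)
    induction e using Sym2.ind with
    | _ a b =>
    obtain ⟨i, rfl⟩ := hvV ▸ mem_mgVerts hαe (Sym2.mem_mk_left a b)
    obtain ⟨j, rfl⟩ := hvV ▸ mem_mgVerts hαe (Sym2.mem_mk_right (v i) b)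
    exact ⟨(i, j), rfl⟩
  have hcard : Multiset.card (mgEdgeMultiset α - parentEdges v p) = h := by
    rw [Multiset.card_sub hT, card_mgEdgeMultiset, card_parentEdges, hE, Nat.add_sub_cancel_left]
  obtain ⟨x, hx⟩ := Multiset.exists_eq_ofFn_of_forall_mem_range hrest hcard
  refine ⟨(Fin.tail v, p, x), funext fun e => ?_⟩
  have hv' : Fin.cons r (Fin.tail v) = v := hv0 ▸ Fin.cons_self_tail v
  simp only [mgDecode, hv']
  rw [pairEdges, ← hx, add_tsub_cancel_of_le hT, count_mgEdgeMultiset]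

theorem ncard_connected_multigraphs_le (r : Fin n) (m h : ℕ) :
    {α : Sym2 (Fin n) → ℕ | mgEdges α = m + h ∧ mgConnected α ∧ r ∈ mgVerts α ∧
      (mgVerts α).ncard = m + 1}.ncard ≤ n ^ m * (m ^ m * ((m + 1) * (m + 1)) ^ h) :=
  calc _ ≤ (Set.range (mgDecode (m := m) (h := h) r)).ncard :=
        Set.ncard_le_ncard (fun _ hα => (exists_mgDecode_eq hα.1 hα.2.1 hα.2.2.1 hα.2.2.2).imp
          fun _ hc => hc.symm) (Set.finite_range _)
    _ ≤ Nat.card (MgCode n m h) := Finite.card_range_le _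
    _ = n ^ m * (m ^ m * ((m + 1) * (m + 1)) ^ h) := by simp [MgCode]

theorem count_connected_multigraphs_general {n : ℕ} (hn : 0 < n) (d h : ℕ)
    (hh : h ≤ d) :
    ((Set.ncard {α : Sym2 (Fin n) → ℕ |
        mgEdges α = d ∧ mgConnected α ∧ (⟨0, hn⟩ : Fin n) ∈ mgVerts α ∧
        (mgVerts α).ncard = d + 1 - h} : ℕ) : ℝ)
      ≤ ((d : ℝ) * n) ^ d * ((d : ℝ) / n) ^ h := by
  obtain ⟨m, rfl⟩ : ∃ m, d = m + h := ⟨d - h, by omega⟩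
  rw [show m + h + 1 - h = m + 1 by omega]
  have hsq : ((m + 1) * (m + 1)) ^ h ≤ ((m + h) * (m + h)) ^ h := by
    rcases Nat.eq_zero_or_pos h with rfl | hpos
    · simp
    · exact Nat.pow_le_pow_left (Nat.mul_self_le_mul_self (by omega)) h
  calc _ ≤ ((n ^ m * (m ^ m * ((m + 1) * (m + 1)) ^ h) : ℕ) : ℝ) := by
        exact_mod_cast ncard_connected_multigraphs_le _ m h
    _ ≤ ((n ^ m * ((m + h) ^ m * ((m + h) * (m + h)) ^ h) : ℕ) : ℝ) := by
        exact_mod_cast Nat.mul_le_mul_left _ (Nat.mul_le_mul (Nat.pow_le_pow_left (by omega) m) hsq)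
    _ = (((m + h : ℕ) : ℝ) * n) ^ (m + h) * (((m + h : ℕ) : ℝ) / n) ^ h := by
        have : (n : ℝ) ≠ 0 := by positivity
        simp only [Nat.cast_mul, Nat.cast_pow]
        generalize ((m + h : ℕ) : ℝ) = x
        rw [div_pow, pow_add]
        field_simp
        ring

/-- **Lemma 3.5 (counting connected multigraphs).** For `d ≥ 1` and `0 ≤ h ≤ d`, the number
of connected multigraphs on `[n]` with `d` edges, spanning vertex `1`, and spanning exactly
`d+1−h` vertices, is at most `(d·n)^d·(d/n)^h`. -/
theorem count_connected_multigraphs {n : ℕ} (hn : 0 < n) (d h : ℕ) (hd : 1 ≤ d)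
    (hh : h ≤ d) :
    ((Set.ncard {α : Sym2 (Fin n) → ℕ |
        mgEdges α = d ∧ mgConnected α ∧ (⟨0, hn⟩ : Fin n) ∈ mgVerts α ∧
        (mgVerts α).ncard = d + 1 - h} : ℕ) : ℝ)
      ≤ ((d : ℝ) * n) ^ d * ((d : ℝ) / n) ^ h :=
  count_connected_multigraphs_general hn d h hh
end

section
/- If X ~ Binomial(n,p) − p·n (a centered binomial random variable) and d ∈ [1,∞), then E|X|^d ≤ √(2π)·[(2·d·p·n)^{d/2} + (4d/3)^d]. -/
/-!
Chernoff's method. For every `l > 0` one has `|x|^d ≤ (d/l)^d e^{-d} (e^{lx} + e^{-lx})`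
(from `y ≤ e^{y-1}` at `y = l|x|/d`), and the moment generating function of `X = B - pn` obeys
`E e^{sX} ≤ exp(pn(e^s - 1 - s))` (from `1 + y ≤ e^y`). Whenever `pn(e^l - 1 - l) ≤ d` this gives
`E|X|^d ≤ 2 (d/l)^d`. Take `l = √(d/(pn))` if `d ≤ pn`, using `e^l - 1 - l ≤ l²` for `l ≤ 1`,
and `l = 1` otherwise; the constant `2` is then absorbed by `√(2π)`.
-/

open Finset Real

noncomputable def binomialExpectation (n : ℕ) (p : ℝ) (f : ℝ → ℝ) : ℝ :=
  ∑ k ∈ range (n + 1), (n.choose k : ℝ) * p ^ k * (1 - p) ^ (n - k) * f k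

section binomialExpectation

variable {n : ℕ} {p : ℝ}

theorem binomialExpectation_mono (hp0 : 0 ≤ p) (hp1 : p ≤ 1) {f g : ℝ → ℝ}
    (hfg : ∀ x, f x ≤ g x) : binomialExpectation n p f ≤ binomialExpectation n p g := by
  have hq : 0 ≤ 1 - p := sub_nonneg.2 hp1
  unfold binomialExpectation
  gcongr with k
  exact hfg k

theorem binomialExpectation_add (f g : ℝ → ℝ) :
    binomialExpectation n p (fun x => f x + g x) =
      binomialExpectation n p f + binomialExpectation n p g := by
  simp only [binomialExpectation, mul_add, sum_add_distrib]

theorem binomialExpectation_const_mul (c : ℝ) (f : ℝ → ℝ) :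
    binomialExpectation n p (fun x => c * f x) = c * binomialExpectation n p f := by
  simp only [binomialExpectation, mul_sum]
  exact sum_congr rfl fun _ _ => by ring

theorem binomialExpectation_exp_mul (s : ℝ) :
    binomialExpectation n p (fun x => exp (s * x)) = (p * exp s + (1 - p)) ^ n := by
  rw [add_pow, binomialExpectation]
  refine sum_congr rfl fun k _ => ?_
  rw [mul_comm s, exp_nat_mul, mul_pow]
  ring

theorem binomialExpectation_exp_mul_sub_le (hp0 : 0 ≤ p) (hp1 : p ≤ 1) (s : ℝ) :
    binomialExpectation n p (fun x => exp (s * (x - p * n))) ≤ exp (p * n * (exp s - 1 - s)) := by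
  have hfactor : (fun x => exp (s * (x - p * n))) = fun x => exp (-(s * (p * n))) * exp (s * x) :=
    funext fun x => by rw [← exp_add]; ring_nf
  have hbase : p * exp s + (1 - p) ≤ exp (p * (exp s - 1)) := by
    linarith [add_one_le_exp (p * (exp s - 1))]
  rw [hfactor, binomialExpectation_const_mul, binomialExpectation_exp_mul]
  calc exp (-(s * (p * n))) * (p * exp s + (1 - p)) ^ n
      ≤ exp (-(s * (p * n))) * exp (p * (exp s - 1)) ^ n := by
        gcongr
    _ = exp (p * n * (exp s - 1 - s)) := by
        rw [← exp_nat_mul, ← exp_add]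
        ring_nf

end binomialExpectation

theorem div_rpow_le_exp_sub {d t : ℝ} (hd : 0 < d) (ht : 0 ≤ t) : (t / d) ^ d ≤ exp (t - d) :=
  calc (t / d) ^ d ≤ exp (t / d - 1) ^ d := by
        gcongr
        linarith [add_one_le_exp (t / d - 1)]
    _ = exp (t - d) := by
        rw [← exp_mul]
        field_simp

theorem abs_rpow_le_exp_add_exp {d l : ℝ} (hd : 0 < d) (hl : 0 < l) (x : ℝ) :
    |x| ^ d ≤ (d / l) ^ d * exp (-d) * (exp (l * x) + exp (-l * x)) := by
  have hexp_abs : exp (l * |x|) ≤ exp (l * x) + exp (-l * x) := by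
    rcases abs_cases x with ⟨h, _⟩ | ⟨h, _⟩
    · rw [h]; linarith [exp_pos (-l * x)]
    · rw [h, mul_neg, ← neg_mul]; linarith [exp_pos (l * x)]
  calc |x| ^ d = (d / l) ^ d * (l * |x| / d) ^ d := by
        rw [← mul_rpow (by positivity) (by positivity)]
        field_simp
    _ ≤ (d / l) ^ d * exp (l * |x| - d) := by
        gcongr
        exact div_rpow_le_exp_sub hd (by positivity)
    _ = (d / l) ^ d * exp (-d) * exp (l * |x|) := by
        rw [sub_eq_neg_add, exp_add]
        ring
    _ ≤ (d / l) ^ d * exp (-d) * (exp (l * x) + exp (-l * x)) := by gcongr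

theorem exp_neg_add_le_exp_sub {l : ℝ} (hl : 0 ≤ l) : exp (-l) - 1 + l ≤ exp l - 1 - l := by
  have h := self_le_sinh_iff.2 hl
  rw [sinh_eq] at h
  linarith

section centered

variable {n : ℕ} {p d : ℝ}

theorem binomialExpectation_abs_sub_rpow_le (hp0 : 0 ≤ p) (hp1 : p ≤ 1) (hd : 0 < d) {l : ℝ}
    (hl : 0 < l) (h : p * n * (exp l - 1 - l) ≤ d) :
    binomialExpectation n p (fun x => |x - p * n| ^ d) ≤ 2 * (d / l) ^ d := by
  have hmgf_pos := binomialExpectation_exp_mul_sub_le (n := n) hp0 hp1 l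
  have hmgf_neg := binomialExpectation_exp_mul_sub_le (n := n) hp0 hp1 (-l)
  have hneg : p * n * (exp (-l) - 1 - -l) ≤ d :=
    le_trans (mul_le_mul_of_nonneg_left (by linarith [exp_neg_add_le_exp_sub hl.le])
      (by positivity)) h
  calc binomialExpectation n p (fun x => |x - p * n| ^ d)
      ≤ binomialExpectation n p (fun x => (d / l) ^ d * exp (-d) *
          (exp (l * (x - p * n)) + exp (-l * (x - p * n)))) :=
        binomialExpectation_mono hp0 hp1 fun x => abs_rpow_le_exp_add_exp hd hl _
    _ = (d / l) ^ d * exp (-d) * (binomialExpectation n p (fun x => exp (l * (x - p * n))) +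
          binomialExpectation n p (fun x => exp (-l * (x - p * n)))) := by
        rw [binomialExpectation_const_mul, binomialExpectation_add]
    _ ≤ (d / l) ^ d * exp (-d) * (exp d + exp d) := by
        gcongr
        · exact hmgf_pos.trans (exp_le_exp.2 h)
        · exact hmgf_neg.trans (exp_le_exp.2 hneg)
    _ = 2 * (d / l) ^ d := by
        rw [mul_assoc, mul_add, ← exp_add, neg_add_cancel, exp_zero]
        ring

theorem binomialExpectation_abs_sub_rpow_le_of_le (hp0 : 0 ≤ p) (hp1 : p ≤ 1) (hd : 0 < d)
    (h : d ≤ p * n) :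
    binomialExpectation n p (fun x => |x - p * n| ^ d) ≤ 2 * (d * (p * n)) ^ (d / 2) := by
  have hm : 0 < p * n := hd.trans_le h
  set l := √(d / (p * n))
  have hl : 0 < l := sqrt_pos.2 (by positivity)
  have hl2 : l ^ 2 = d / (p * n) := sq_sqrt (by positivity)
  have hl1 : |l| ≤ 1 := by
    rw [abs_of_pos hl]
    exact sqrt_le_one.2 ((div_le_one hm).2 h)
  have hdl : (d / l) ^ 2 = d * (p * n) := by
    rw [div_pow, hl2]
    field_simp
  calc binomialExpectation n p (fun x => |x - p * n| ^ d) ≤ 2 * (d / l) ^ d := by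
        refine binomialExpectation_abs_sub_rpow_le hp0 hp1 hd hl ?_
        calc p * n * (exp l - 1 - l) ≤ p * n * l ^ 2 := by
              gcongr
              exact (abs_le.1 (abs_exp_sub_one_sub_id_le hl1)).2
          _ = d := by
              rw [hl2, mul_div_cancel₀ d hm.ne']
    _ = 2 * (d * (p * n)) ^ (d / 2) := by
        rw [← hdl, ← rpow_natCast, ← rpow_mul (by positivity)]
        norm_num [mul_div_cancel₀]

theorem binomialExpectation_abs_sub_rpow_le_of_ge (hp0 : 0 ≤ p) (hp1 : p ≤ 1) (hd : 0 < d)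
    (h : p * n ≤ d) : binomialExpectation n p (fun x => |x - p * n| ^ d) ≤ 2 * d ^ d := by
  have hm : 0 ≤ p * n := by positivity
  simpa using binomialExpectation_abs_sub_rpow_le hp0 hp1 hd one_pos
    (by nlinarith [exp_one_lt_three, exp_one_gt_two])

end centered

theorem two_le_sqrt_two_mul_pi : (2 : ℝ) ≤ √(2 * π) :=
  (le_sqrt zero_le_two (by positivity)).2 (by nlinarith [pi_gt_three])

/-- **Lemma B.2 (moments of a centered binomial).** If `X = B − pn` with
`B ~ Binomial(n,p)` and `d ≥ 1` (real), then
`E|X|^d ≤ √(2π)·[(2dpn)^{d/2} + (4d/3)^d]`. The expectation is written out as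
the sum over the binomial distribution. -/
theorem centered_binomial_abs_moment (n : ℕ) (p : ℝ) (hp0 : 0 ≤ p) (hp1 : p ≤ 1)
    (d : ℝ) (hd : 1 ≤ d) :
    ∑ k ∈ Finset.range (n + 1),
        (Nat.choose n k : ℝ) * p ^ k * (1 - p) ^ (n - k) * |(k : ℝ) - p * n| ^ d
      ≤ Real.sqrt (2 * Real.pi) *
          ((2 * d * p * n) ^ (d / 2) + (4 * d / 3) ^ d) := by
  have hd0 : 0 < d := by linarith
  have hm : 0 ≤ p * n := by positivity
  change binomialExpectation n p (fun x => |x - p * n| ^ d) ≤ _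
  rcases le_total d (p * n) with h | h
  · calc _ ≤ 2 * (d * (p * n)) ^ (d / 2) :=
          binomialExpectation_abs_sub_rpow_le_of_le hp0 hp1 hd0 h
      _ ≤ √(2 * π) * (2 * (d * (p * n))) ^ (d / 2) := by
          gcongr ?_ * ?_
          · exact two_le_sqrt_two_mul_pi
          · exact rpow_le_rpow (by positivity) (by linarith [mul_nonneg hd0.le hm]) (by positivity)
      _ = √(2 * π) * (2 * d * p * n) ^ (d / 2) := by ring_nf
      _ ≤ _ := by gcongr; exact le_add_of_nonneg_right (by positivity)
  · calc _ ≤ 2 * d ^ d := binomialExpectation_abs_sub_rpow_le_of_ge hp0 hp1 hd0 h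
      _ ≤ √(2 * π) * (4 * d / 3) ^ d := by
          gcongr
          · exact two_le_sqrt_two_mul_pi
          · linarith
      _ ≤ _ := by gcongr; exact le_add_of_nonneg_left (by positivity)
end

section
/- For all a > 0 and b ≥ 1/2, ∫₀^∞ exp(−a·x^{1/b}) dx = Γ(b+1)/a^b ≤ √(π/2)·(b/a)^b. -/
/-!
The integral is Euler's integral after the substitution `t = a x^{1/b}`. For the bound, log-convexity
of `Γ` gives `Γ(x) ≤ 1` on `[1, 2]`, hence `Γ(x + 1) ≤ x^x` for `x ≥ 1` by the recursion
`Γ(x + 1) = x Γ(x)`. On `[1/2, 1]` it interpolates between `Γ(3/2) = √π/2` and `Γ(2) = 1`, giving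
`Γ(b + 1) ≤ (π/4)^{1-b}`; this meets `√(π/2) b^b` at `b = 1/2` and stays below it because
`b log b` lies above its tangent there, which comes down to `8 ≤ eπ`.
-/

open Real Set

namespace Real

lemma Gamma_le_one_of_mem_Icc {x : ℝ} (hx : x ∈ Icc 1 2) : Gamma x ≤ 1 := by
  simpa [Gamma_two] using
    convexOn_Gamma.le_max_of_mem_Icc (by norm_num : (1 : ℝ) ∈ Ioi 0) (by norm_num) hx

lemma Gamma_add_one_le_rpow_self {x : ℝ} (hx : 1 ≤ x) : Gamma (x + 1) ≤ x ^ x := by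
  obtain ⟨n, hn⟩ := exists_nat_ge x
  induction n generalizing x with
  | zero => norm_num at hn; linarith
  | succ n ih =>
    rw [Gamma_add_one (by linarith)]
    rcases le_or_gt x 2 with hx2 | hx2
    · calc x * Gamma x ≤ x * 1 := by
            gcongr; exact Gamma_le_one_of_mem_Icc ⟨hx, hx2⟩
        _ = x ^ (1 : ℝ) := by rw [rpow_one, mul_one]
        _ ≤ x ^ x := rpow_le_rpow_of_exponent_le hx hx
    · have hprev : Gamma (x - 1 + 1) ≤ (x - 1) ^ (x - 1) :=
        ih (by linarith) (by push_cast at hn; linarith)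
      rw [sub_add_cancel] at hprev
      calc x * Gamma x ≤ x * (x - 1) ^ (x - 1) := by gcongr
        _ ≤ x * x ^ (x - 1) := by gcongr; linarith
        _ = x ^ x := by
            rw [← rpow_one_add' (by linarith) (by linarith)]; ring_nf

lemma log_Gamma_add_one_le {b : ℝ} (hb : b ∈ Icc (1 / 2) 1) :
    log (Gamma (b + 1)) ≤ (1 - b) * log (π / 4) := by
  obtain ⟨hb₁, hb₂⟩ := hb
  have hconv := convexOn_log_Gamma.2 (by norm_num : (3 / 2 : ℝ) ∈ Ioi 0)
    (by norm_num : (2 : ℝ) ∈ Ioi 0) (by linarith : 0 ≤ 2 - 2 * b) (by linarith : 0 ≤ 2 * b - 1)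
    (by ring)
  have hΓ : log (Gamma (3 / 2)) = log (π / 4) / 2 := by
    have h : Gamma (3 / 2) = sqrt (π / 4) := by
      rw [show (3 / 2 : ℝ) = 1 / 2 + 1 by norm_num, Gamma_add_one (by norm_num), Gamma_one_half_eq,
        sqrt_div' _ (by norm_num : (0 : ℝ) ≤ 4), show (4 : ℝ) = 2 ^ 2 by norm_num,
        sqrt_sq two_pos.le]
      ring
    rw [h, log_sqrt (by positivity)]
  simp only [smul_eq_mul, Function.comp_apply, Gamma_two, log_one, mul_zero, add_zero, hΓ]
    at hconv
  rw [show (2 - 2 * b) * (3 / 2) + (2 * b - 1) * 2 = b + 1 by ring] at hconv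
  linarith

lemma three_mul_log_two_le_one_add_log_pi : 3 * log 2 ≤ 1 + log π := by
  have h8 : log 8 ≤ log (exp 1 * π) :=
    log_le_log (by norm_num) (by nlinarith [exp_one_gt_d9, pi_gt_d6])
  rwa [log_mul (exp_ne_zero 1) pi_ne_zero, log_exp, show (8 : ℝ) = 2 ^ 3 by norm_num,
    log_pow, Nat.cast_ofNat] at h8

lemma mul_log_pi_div_four_le {b : ℝ} (hb : 1 / 2 ≤ b) :
    (1 - b) * log (π / 4) ≤ log (π / 2) / 2 + b * log b := by
  have hb₀ : 0 < b := by linarith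
  have htangent : b - 1 / 2 - b * log 2 ≤ b * log b := by
    have h := log_le_sub_one_of_pos (by positivity : 0 < 1 / (2 * b))
    rw [one_div, log_inv, log_mul two_ne_zero hb₀.ne'] at h
    have h' := mul_le_mul_of_nonneg_left h hb₀.le
    have hhalf : b * (2 * b)⁻¹ = 1 / 2 := by field_simp
    linarith
  have h4 : log (π / 4) = log π - 2 * log 2 := by
    rw [log_div pi_ne_zero (by norm_num), show (4 : ℝ) = 2 ^ 2 by norm_num, log_pow,
      Nat.cast_ofNat]
  rw [h4, log_div pi_ne_zero two_ne_zero]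
  nlinarith [three_mul_log_two_le_one_add_log_pi]

lemma Gamma_add_one_le_sqrt_pi_div_two_mul_rpow_self {b : ℝ} (hb : 1 / 2 ≤ b) :
    Gamma (b + 1) ≤ sqrt (π / 2) * b ^ b := by
  have hb₀ : 0 < b := by linarith
  rcases le_or_gt 1 b with hb₁ | hb₁
  · have hsqrt : 1 ≤ sqrt (π / 2) := one_le_sqrt.2 (by linarith [pi_gt_three])
    calc Gamma (b + 1) ≤ b ^ b := Gamma_add_one_le_rpow_self hb₁
      _ ≤ sqrt (π / 2) * b ^ b := le_mul_of_one_le_left (by positivity) hsqrt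
  · rw [← log_le_log_iff (Gamma_pos_of_pos (by linarith)) (by positivity),
      log_mul (by positivity) (by positivity), log_sqrt (by positivity), log_rpow hb₀]
    exact (log_Gamma_add_one_le ⟨hb, hb₁.le⟩).trans (mul_log_pi_div_four_le hb)

end Real

/-- **Gamma-integral identity and bound (used in Lemma B.2).** For `a > 0` and `b ≥ 1/2`,
`∫₀^∞ exp(−a·x^{1/b}) dx = Γ(b+1)/a^b ≤ √(π/2)·(b/a)^b`. -/
theorem integral_exp_neg_rpow_eq_gamma (a b : ℝ) (ha : 0 < a) (hb : 1 / 2 ≤ b) :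
    (∫ x in Set.Ioi (0 : ℝ), Real.exp (-(a * x ^ (1 / b))))
        = Real.Gamma (b + 1) / a ^ b ∧
    Real.Gamma (b + 1) / a ^ b ≤ Real.sqrt (Real.pi / 2) * (b / a) ^ b := by
  have hb₀ : 0 < b := by linarith
  have hab : 0 < a ^ b := rpow_pos_of_pos ha b
  constructor
  · simp_rw [← neg_mul]
    rw [integral_exp_neg_mul_rpow (one_div_pos.2 hb₀) ha, one_div_one_div, neg_div,
      one_div_one_div, rpow_neg ha.le, div_eq_inv_mul]
  · rw [div_rpow hb₀.le ha.le, ← mul_div_assoc]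
    exact div_le_div_of_nonneg_right (Gamma_add_one_le_sqrt_pi_div_two_mul_rpow_self hb) hab.le
end

section
/- Let g be a real random variable with E[g²] finite and suppose E[g⁴] ≤ K·E[g²]² for some K ≥ 1. If Pr{g² > ε} ≤ δ and δ·K < 1, then E[g²] ≤ ε / (1 − √(δK)). -/
open MeasureTheory

/-! With `A = {g² > ε}` and `m = E[g²]`, truncation gives `m ≤ ε + E[g² 1_A]` (for `ε ≥ 0`, which
is forced because `Pr A = 1` would contradict `Pr A ≤ δ ≤ δK < 1`), and Cauchy–Schwarz bounds
`E[g² 1_A] ≤ √(E[g⁴] Pr A) ≤ √(δK) m`. Solving `m ≤ ε + √(δK) m` gives the claim. -/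

section

variable {Ω : Type*} [MeasurableSpace Ω] {μ : Measure Ω} {f : Ω → ℝ}

theorem integral_le_sqrt_integral_sq_mul_sqrt_measureReal_univ [IsFiniteMeasure μ]
    (hf₀ : 0 ≤ᵐ[μ] f) (hf : MemLp f 2 μ) :
    ∫ ω, f ω ∂μ ≤ √(∫ ω, f ω ^ 2 ∂μ) * √(μ.real Set.univ) := by
  have hHolder := integral_mul_le_Lp_mul_Lq_of_nonneg Real.HolderConjugate.two_two hf₀
    (.of_forall fun _ => zero_le_one) (by simpa using hf)
    (memLp_const (1 : ℝ))
  simpa [Real.sqrt_eq_rpow] using hHolder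

theorem setIntegral_le_sqrt_integral_sq_mul_sqrt_measureReal [IsFiniteMeasure μ]
    (hf₀ : 0 ≤ᵐ[μ] f) (hf : MemLp f 2 μ) (s : Set Ω) :
    ∫ ω in s, f ω ∂μ ≤ √(∫ ω, f ω ^ 2 ∂μ) * √(μ.real s) := by
  calc ∫ ω in s, f ω ∂μ ≤ √(∫ ω in s, f ω ^ 2 ∂μ) * √((μ.restrict s).real Set.univ) :=
        integral_le_sqrt_integral_sq_mul_sqrt_measureReal_univ (ae_restrict_of_ae hf₀)
          (hf.restrict s)
    _ ≤ √(∫ ω, f ω ^ 2 ∂μ) * √(μ.real s) := by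
        rw [measureReal_restrict_apply_univ]
        exact mul_le_mul_of_nonneg_right (Real.sqrt_le_sqrt <|
          setIntegral_le_integral hf.integrable_sq (.of_forall fun _ => sq_nonneg _))
          (Real.sqrt_nonneg _)

theorem integral_le_add_setIntegral_lt [IsProbabilityMeasure μ] (hf : Integrable f μ)
    {ε : ℝ} (hε : 0 ≤ ε) :
    ∫ ω, f ω ∂μ ≤ ε + ∫ ω in {ω | ε < f ω}, f ω ∂μ := by
  have hs : NullMeasurableSet {ω | ε < f ω} μ :=
    nullMeasurableSet_lt aemeasurable_const hf.aemeasurable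
  have hf_le : ∀ ω, f ω ≤ ε + {ω | ε < f ω}.indicator f ω := by
    intro ω
    by_cases h : ε < f ω
    · rw [Set.indicator_of_mem (s := {ω | ε < f ω}) h]
      linarith
    · rw [Set.indicator_of_notMem (s := {ω | ε < f ω}) h, add_zero]
      exact le_of_not_gt h
  calc ∫ ω, f ω ∂μ ≤ ∫ ω, (ε + {ω | ε < f ω}.indicator f ω) ∂μ :=
        integral_mono hf ((integrable_const ε).add (hf.indicator₀ hs)) hf_le
    _ = ε + ∫ ω in {ω | ε < f ω}, f ω ∂μ := by
        rw [integral_add (integrable_const ε) (hf.indicator₀ hs), integral_indicator₀ hs]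
        simp

theorem nonneg_of_measureReal_setOf_lt_lt_one [IsProbabilityMeasure μ] (hf₀ : ∀ ω, 0 ≤ f ω)
    {ε : ℝ} (h : μ.real {ω | ε < f ω} < 1) : 0 ≤ ε := by
  by_contra! hε
  have : {ω | ε < f ω} = Set.univ := Set.eq_univ_of_forall fun ω => hε.trans_le (hf₀ ω)
  simp [this] at h

theorem integral_le_add_sqrt_integral_sq_mul_sqrt_measureReal_lt [IsProbabilityMeasure μ]
    (hf₀ : 0 ≤ᵐ[μ] f) (hf : MemLp f 2 μ) {ε : ℝ} (hε : 0 ≤ ε) :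
    ∫ ω, f ω ∂μ ≤ ε + √(∫ ω, f ω ^ 2 ∂μ) * √(μ.real {ω | ε < f ω}) :=
  (integral_le_add_setIntegral_lt (hf.integrable one_le_two) hε).trans <|
    add_le_add_right (setIntegral_le_sqrt_integral_sq_mul_sqrt_measureReal hf₀ hf _) ε

end

/-- **Rearranged Paley–Zygmund argument (as in Corollary 4.4).** If `E[g⁴] ≤ K·E[g²]²`
with `K ≥ 1`, and `Pr{g² > ε} ≤ δ` with `δ·K < 1`, then `E[g²] ≤ ε/(1 − √(δK))`. -/
theorem paley_zygmund_rearranged {Ω : Type*} [MeasurableSpace Ω]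
    (μ : Measure Ω) [IsProbabilityMeasure μ] (g : Ω → ℝ)
    (hg2 : Integrable (fun ω => (g ω) ^ 2) μ)
    (hg4 : Integrable (fun ω => (g ω) ^ 4) μ)
    (K : ℝ) (hK : 1 ≤ K)
    (hmom : (∫ ω, (g ω) ^ 4 ∂μ) ≤ K * (∫ ω, (g ω) ^ 2 ∂μ) ^ 2)
    (ε δ : ℝ)
    (hprob : (μ {ω | ε < (g ω) ^ 2}).toReal ≤ δ)
    (hδK : δ * K < 1) :
    (∫ ω, (g ω) ^ 2 ∂μ) ≤ ε / (1 - Real.sqrt (δ * K)) := by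
  set m := ∫ ω, g ω ^ 2 ∂μ
  have hδ : 0 ≤ δ := ENNReal.toReal_nonneg.trans hprob
  have hε : 0 ≤ ε := nonneg_of_measureReal_setOf_lt_lt_one (fun ω => sq_nonneg (g ω)) <|
    hprob.trans_lt <| (le_mul_of_one_le_right hδ hK).trans_lt hδK
  have hg2_memLp : MemLp (fun ω => g ω ^ 2) 2 μ :=
    (memLp_two_iff_integrable_sq hg2.aestronglyMeasurable).2 (by simpa [← pow_mul] using hg4)
  have hsqrt : √(δ * K) < 1 := (Real.sqrt_lt' one_pos).2 (by simpa using hδK)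
  have key : m ≤ ε + √(δ * K) * m :=
    calc m ≤ ε + √(∫ ω, (g ω ^ 2) ^ 2 ∂μ) * √(μ.real {ω | ε < g ω ^ 2}) :=
          integral_le_add_sqrt_integral_sq_mul_sqrt_measureReal_lt
            (.of_forall fun ω => sq_nonneg (g ω)) hg2_memLp hε
      _ ≤ ε + √(K * m ^ 2) * √δ := by
          simp only [← pow_mul]
          gcongr
          exact hprob
      _ = ε + √(δ * K) * m := by
          rw [← Real.sqrt_mul (by positivity), mul_right_comm, mul_comm K,
            Real.sqrt_mul (by positivity), Real.sqrt_sq (integral_nonneg fun ω => sq_nonneg _)]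
  rw [le_div_iff₀ (by linarith)]
  linarith
end

section
/- In the planted submatrix problem, for the cumulant quantities κ_α defined recursively by κ_α = E[x·X^α] − Σ_{0 ≤ β ⪇ α} κ_β·binom(α,β)·E[X^{α−β}], one has κ_0 = ρ and, for every multigraph α with |α| ≥ 1, |κ_α| ≤ (|α|+1)^{|α|} · λ^{|α|} · ρ^{|V(α)|}. -/
/-! Strong induction on `α` in the componentwise order. By induction `|κ_β| ≤ |α|^{|β|} E[X^β]`
for `β ⪇ α`, and `E[X^β] E[X^{α-β}] ≤ E[X^α]` because `V(β) ∪ V(α-β) ⊇ V(α)` and `ρ ≤ 1`.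
The recursion then gives `|κ_α| ≤ E[X^α] (1 + ∑_{β ⪇ α} binom(α,β) |α|^{|β|})`, and the
binomial theorem, applied edge by edge, evaluates the sum as `(|α|+1)^{|α|} - |α|^{|α|}`,
which is at most `(|α|+1)^{|α|} - 1`. -/

variable {n : ℕ}

/-- `E[X^α] = λ^{|α|}·ρ^{|V(α)|}` in the planted submatrix model, where `X_{ij} = λ v_i v_j`
with `v` i.i.d. `Bernoulli(ρ)`. -/
noncomputable def momX (lam ρ : ℝ) (α : Sym2 (Fin n) → ℕ) : ℝ :=
  lam ^ mgEdges α * ρ ^ (mgVerts α).ncard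

/-- `E[x·X^α] = λ^{|α|}·ρ^{|V(α)∪{1}|}` in the planted submatrix model, where `x = v_1`. -/
noncomputable def momxX (lam ρ : ℝ) (v1 : Fin n) (α : Sym2 (Fin n) → ℕ) : ℝ :=
  lam ^ mgEdges α * ρ ^ (insert v1 (mgVerts α)).ncard

/-- `κ` satisfies the defining recursion of the cumulant quantities `κ_α`:
`κ_α = E[x X^α] − Σ_{0 ≤ β ⪇ α} κ_β·binom(α,β)·E[X^{α−β}]`. -/
def KappaRec (lam ρ : ℝ) (v1 : Fin n) (κ : (Sym2 (Fin n) → ℕ) → ℝ) : Prop :=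
  ∀ α : Sym2 (Fin n) → ℕ,
    κ α = momxX lam ρ v1 α
      - ∑ β ∈ (Finset.Icc 0 α).erase α,
          κ β * (∏ e, ((α e).choose (β e) : ℝ)) * momX lam ρ (fun e => α e - β e)

@[simp]
lemma mgEdges_zero : mgEdges (0 : Sym2 (Fin n) → ℕ) = 0 := by
  simp [mgEdges]

@[simp]
lemma mgVerts_zero : mgVerts (0 : Sym2 (Fin n) → ℕ) = ∅ := by
  ext v; simp [mgVerts]

lemma mgEdges_add (β γ : Sym2 (Fin n) → ℕ) :
    mgEdges (β + γ) = mgEdges β + mgEdges γ :=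
  Finset.sum_add_distrib

lemma mgVerts_add (β γ : Sym2 (Fin n) → ℕ) :
    mgVerts (β + γ) = mgVerts β ∪ mgVerts γ := by
  ext v
  simp only [mgVerts, Pi.add_apply, ne_eq, Nat.add_eq_zero_iff, not_and_or, or_and_right,
    exists_or]
  rfl

lemma mgEdges_strictMono : StrictMono (mgEdges (n := n)) :=
  Fintype.sum_strictMono

lemma sum_Icc_prod_choose_mul_pow_mgEdges {R : Type*} [CommSemiring R]
    (α : Sym2 (Fin n) → ℕ) (x : R) :
    ∑ β ∈ Finset.Icc 0 α, (∏ e, ((α e).choose (β e) : R)) * x ^ mgEdges β =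
      (x + 1) ^ mgEdges α := by
  have binomial (a : ℕ) : ∑ k ∈ Finset.Icc 0 a, (a.choose k : R) * x ^ k = (x + 1) ^ a := by
    rw [add_pow, ← Nat.range_succ_eq_Icc_zero]
    simp [mul_comm]
  simp_rw [mgEdges, ← Finset.prod_pow_eq_pow_sum, ← Finset.prod_mul_distrib, ← binomial,
    Finset.prod_univ_sum, Pi.Icc_eq]
  rfl

section Moments

variable {lam ρ : ℝ}

lemma momX_nonneg (hlam : 0 ≤ lam) (hρ : 0 ≤ ρ) (α : Sym2 (Fin n) → ℕ) :
    0 ≤ momX lam ρ α := by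
  unfold momX; positivity

lemma momxX_le_momX (hlam : 0 ≤ lam) (hρ0 : 0 ≤ ρ) (hρ1 : ρ ≤ 1) (v1 : Fin n)
    (α : Sym2 (Fin n) → ℕ) : momxX lam ρ v1 α ≤ momX lam ρ α :=
  mul_le_mul_of_nonneg_left
    (pow_le_pow_of_le_one hρ0 hρ1 (Set.ncard_le_ncard (Set.subset_insert _ _)))
    (pow_nonneg hlam _)

lemma momX_mul_momX_le (hlam : 0 ≤ lam) (hρ0 : 0 ≤ ρ) (hρ1 : ρ ≤ 1)
    (β γ : Sym2 (Fin n) → ℕ) : momX lam ρ β * momX lam ρ γ ≤ momX lam ρ (β + γ) :=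
  calc momX lam ρ β * momX lam ρ γ
      = lam ^ mgEdges (β + γ) * ρ ^ ((mgVerts β).ncard + (mgVerts γ).ncard) := by
        rw [momX, momX, mgEdges_add]; ring
    _ ≤ momX lam ρ (β + γ) := by
        rw [momX, mgVerts_add]
        exact mul_le_mul_of_nonneg_left
          (pow_le_pow_of_le_one hρ0 hρ1 (Set.ncard_union_le _ _)) (pow_nonneg hlam _)

lemma abs_mul_choose_mul_momX_le (hlam : 0 ≤ lam) (hρ0 : 0 ≤ ρ) (hρ1 : ρ ≤ 1)
    {α β : Sym2 (Fin n) → ℕ} (hβα : β ≤ α) {c B : ℝ} (hB : 0 ≤ B)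
    (hc : |c| ≤ B * momX lam ρ β) :
    |c * (∏ e, ((α e).choose (β e) : ℝ)) * momX lam ρ (α - β)|
      ≤ (∏ e, ((α e).choose (β e) : ℝ)) * B * momX lam ρ α := by
  have hchoose : (0 : ℝ) ≤ ∏ e, ((α e).choose (β e) : ℝ) := by positivity
  have hsplit : momX lam ρ β * momX lam ρ (α - β) ≤ momX lam ρ α :=
    (momX_mul_momX_le hlam hρ0 hρ1 β (α - β)).trans_eq (by rw [add_tsub_cancel_of_le hβα])
  calc |c * (∏ e, ((α e).choose (β e) : ℝ)) * momX lam ρ (α - β)|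
      = |c| * (∏ e, ((α e).choose (β e) : ℝ)) * momX lam ρ (α - β) := by
        rw [abs_mul, abs_mul, abs_of_nonneg hchoose, abs_of_nonneg (momX_nonneg hlam hρ0 _)]
    _ ≤ B * momX lam ρ β * (∏ e, ((α e).choose (β e) : ℝ)) * momX lam ρ (α - β) := by
        gcongr
        exact momX_nonneg hlam hρ0 _
    _ = (∏ e, ((α e).choose (β e) : ℝ)) * B * (momX lam ρ β * momX lam ρ (α - β)) := by ring
    _ ≤ _ := by gcongr

end Moments

namespace KappaRec

variable {lam ρ : ℝ} {v1 : Fin n} {κ : (Sym2 (Fin n) → ℕ) → ℝ}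

lemma apply_zero (hκ : KappaRec lam ρ v1 κ) : κ 0 = ρ := by
  simpa [momxX] using hκ 0

theorem abs_apply_le (hκ : KappaRec lam ρ v1 κ) (hlam : 0 ≤ lam) (hρ0 : 0 ≤ ρ) (hρ1 : ρ ≤ 1)
    (α : Sym2 (Fin n) → ℕ) :
    |κ α| ≤ ((mgEdges α : ℝ) + 1) ^ mgEdges α * momX lam ρ α := by
  induction α using WellFoundedLT.induction with
  | _ α ih =>
  set m := mgEdges α
  have term_le : ∀ β ∈ (Finset.Icc 0 α).erase α,
      |κ β * (∏ e, ((α e).choose (β e) : ℝ)) * momX lam ρ (fun e => α e - β e)|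
        ≤ (∏ e, ((α e).choose (β e) : ℝ)) * (m : ℝ) ^ mgEdges β * momX lam ρ α := by
    intro β hβ
    have hβα : β < α := by
      rw [Finset.mem_erase, Finset.mem_Icc] at hβ
      exact lt_of_le_of_ne hβ.2.2 hβ.1
    have hκβ : |κ β| ≤ (m : ℝ) ^ mgEdges β * momX lam ρ β := by
      refine (ih β hβα).trans ?_
      have : mgEdges β + 1 ≤ m := mgEdges_strictMono hβα
      gcongr
      · exact momX_nonneg hlam hρ0 β
      · exact_mod_cast this
    exact abs_mul_choose_mul_momX_le hlam hρ0 hρ1 hβα.le (by positivity) hκβ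
  have sum_eq : ∑ β ∈ (Finset.Icc 0 α).erase α,
      (∏ e, ((α e).choose (β e) : ℝ)) * (m : ℝ) ^ mgEdges β
        = ((m : ℝ) + 1) ^ m - (m : ℝ) ^ m := by
    rw [Finset.sum_erase_eq_sub (Finset.right_mem_Icc.2 zero_le),
      sum_Icc_prod_choose_mul_pow_mgEdges]
    simp [m]
  have one_le : (1 : ℝ) ≤ (m : ℝ) ^ m := by
    rcases Nat.eq_zero_or_pos m with hm | hm
    · simp [hm]
    · exact one_le_pow₀ (by exact_mod_cast hm)
  calc |κ α|
      ≤ |momxX lam ρ v1 α| + |∑ β ∈ (Finset.Icc 0 α).erase α,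
          κ β * (∏ e, ((α e).choose (β e) : ℝ)) * momX lam ρ (fun e => α e - β e)| := by
        rw [hκ α]; exact abs_sub _ _
    _ ≤ momX lam ρ α + ∑ β ∈ (Finset.Icc 0 α).erase α,
          (∏ e, ((α e).choose (β e) : ℝ)) * (m : ℝ) ^ mgEdges β * momX lam ρ α := by
        rw [abs_of_nonneg (by unfold momxX; positivity)]
        gcongr
        · exact momxX_le_momX hlam hρ0 hρ1 v1 α
        · exact (Finset.abs_sum_le_sum_abs _ _).trans (Finset.sum_le_sum term_le)
    _ = (1 + (((m : ℝ) + 1) ^ m - (m : ℝ) ^ m)) * momX lam ρ α := by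
        rw [← Finset.sum_mul, sum_eq]; ring
    _ ≤ ((m : ℝ) + 1) ^ m * momX lam ρ α := by
        gcongr
        · exact momX_nonneg hlam hρ0 α
        · linarith

end KappaRec

/-- **Lemma 3.4 (bound on the planted-submatrix cumulants).** With `κ` the cumulant
quantities of the planted submatrix problem (defined by the stated recursion), one has
`κ_0 = ρ` and, for every multigraph `α` with at least one edge,
`|κ_α| ≤ (|α|+1)^{|α|}·λ^{|α|}·ρ^{|V(α)|}`. -/
theorem kappa_bound_planted_submatrix {n : ℕ} (hn : 0 < n) (lam ρ : ℝ)
    (hlam : 0 ≤ lam) (hρ0 : 0 < ρ) (hρ1 : ρ ≤ 1)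
    (κ : (Sym2 (Fin n) → ℕ) → ℝ)
    (hκ : KappaRec lam ρ (⟨0, hn⟩ : Fin n) κ) :
    κ 0 = ρ ∧
    ∀ α : Sym2 (Fin n) → ℕ, 1 ≤ mgEdges α →
      |κ α| ≤ ((mgEdges α : ℝ) + 1) ^ mgEdges α * lam ^ mgEdges α *
        ρ ^ (mgVerts α).ncard := by
  refine ⟨hκ.apply_zero, fun α _ => ?_⟩
  rw [mul_assoc]
  exact hκ.abs_apply_le hlam hρ0.le hρ1 α
end
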